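/- arXiv:2005.01167 — 2 statements merged into one kernel-verified Lean document; each statement's English description precedes it below -/
import Mathlib

section
/- For any region divided into finitely many subareas with positive areas A_1,…,A_M and nonnegative populations n_1,…,n_M with total population n = ∑ n_i > 0, the standard population density ρ_S equals the population-weighted density ρ_W if and only if every subarea has positive population and all subareas have the same density n_i / A_i. -/
/-!
`n² / ∑ A_i` and `∑ n_i² / A_i` differ by `∑ A_i (n_i / A_i - ρ_S)²`, so `ρ_S = ρ_W` exactly when
every subarea has density `ρ_S`; since `ρ_S > 0`, this forces every `n_i` to be positive.
-/

namespace Finset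

variable {ι R : Type*} [Field R] (s : Finset ι) (x : ι → R) {w : ι → R}

theorem sum_sq_div_sub_sq_sum_div_sum (hw : ∀ i ∈ s, w i ≠ 0) (hW : ∑ i ∈ s, w i ≠ 0) :
    ∑ i ∈ s, x i ^ 2 / w i - (∑ i ∈ s, x i) ^ 2 / ∑ i ∈ s, w i =
      ∑ i ∈ s, w i * (x i / w i - (∑ i ∈ s, x i) / ∑ i ∈ s, w i) ^ 2 := by
  set c := (∑ i ∈ s, x i) / ∑ i ∈ s, w i
  have expand : ∀ i ∈ s, w i * (x i / w i - c) ^ 2 = x i ^ 2 / w i - 2 * c * x i + c ^ 2 * w i :=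
    fun i hi ↦ by field_simp [hw i hi]; ring
  rw [sum_congr rfl expand, sum_add_distrib, sum_sub_distrib, ← mul_sum, ← mul_sum]
  simp only [c]
  field_simp
  ring

theorem sum_div_sum_eq_of_forall_div_eq {c : R} (hw : ∀ i ∈ s, w i ≠ 0)
    (hW : ∑ i ∈ s, w i ≠ 0) (h : ∀ i ∈ s, x i / w i = c) :
    (∑ i ∈ s, x i) / ∑ i ∈ s, w i = c := by
  rw [div_eq_iff hW, mul_sum]
  exact sum_congr rfl fun i hi ↦ (div_eq_iff (hw i hi)).1 (h i hi)

/-- The equality case of Sedrakyan's lemma `Finset.sq_sum_div_le_sum_sq_div`. -/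
theorem sq_sum_div_eq_sum_sq_div_iff [LinearOrder R] [IsStrictOrderedRing R]
    (hw : ∀ i ∈ s, 0 < w i) (hs : s.Nonempty) :
    (∑ i ∈ s, x i) ^ 2 / ∑ i ∈ s, w i = ∑ i ∈ s, x i ^ 2 / w i ↔
      ∀ i ∈ s, x i / w i = (∑ i ∈ s, x i) / ∑ i ∈ s, w i := by
  have hw₀ : ∀ i ∈ s, w i ≠ 0 := fun i hi ↦ (hw i hi).ne'
  rw [eq_comm, ← sub_eq_zero, sum_sq_div_sub_sq_sum_div_sum s x hw₀ (sum_pos hw hs).ne',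
    sum_eq_zero_iff_of_nonneg fun i hi ↦ mul_nonneg (hw i hi).le (sq_nonneg _)]
  refine forall₂_congr fun i hi ↦ ?_
  rw [mul_eq_zero, pow_eq_zero_iff two_ne_zero, sub_eq_zero, or_iff_right (hw₀ i hi)]

end Finset

open Finset

theorem standard_density_eq_population_weighted_density_iff_general
    (M : ℕ) (A n : Fin M → ℝ)
    (hA : ∀ i, 0 < A i)
    (hpos : 0 < ∑ i, n i) :
    (∑ i, n i) / (∑ i, A i) = (1 / ∑ i, n i) * ∑ i, (n i) ^ 2 / A i ↔
    (∀ i, 0 < n i) ∧ ∀ i j, n i / A i = n j / A j := by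
  have hM : (univ : Finset (Fin M)).Nonempty := nonempty_of_sum_ne_zero hpos.ne'
  have hS : 0 < ∑ i, A i := sum_pos (fun i _ ↦ hA i) hM
  have hρ : (∑ i, n i) / (∑ i, A i) = (1 / ∑ i, n i) * ∑ i, n i ^ 2 / A i ↔
      (∑ i, n i) ^ 2 / ∑ i, A i = ∑ i, n i ^ 2 / A i := by
    rw [one_div_mul_eq_div, eq_div_iff hpos.ne', div_mul_eq_mul_div, sq]
  rw [hρ, sq_sum_div_eq_sum_sq_div_iff _ _ (fun i _ ↦ hA i) hM]
  simp only [mem_univ, forall_const]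
  constructor
  · intro h
    refine ⟨fun i ↦ ?_, fun i j ↦ by rw [h i, h j]⟩
    rw [(div_eq_iff (hA i).ne').1 (h i)]
    exact mul_pos (div_pos hpos hS) (hA i)
  · rintro ⟨-, h⟩ i
    exact (sum_div_sum_eq_of_forall_div_eq _ _ (fun j _ ↦ (hA j).ne') hS.ne' fun j _ ↦ h j i).symm

/-- `ρ_S = ρ_W` if and only if every subarea has positive
population and all subareas have the same density `n i / A i`. -/
theorem standard_density_eq_population_weighted_density_iff
    (M : ℕ) (A n : Fin M → ℝ)
    (hA : ∀ i, 0 < A i) (hn : ∀ i, 0 ≤ n i)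
    (hpos : 0 < ∑ i, n i) :
    (∑ i, n i) / (∑ i, A i) = (1 / ∑ i, n i) * ∑ i, (n i) ^ 2 / A i ↔
    (∀ i, 0 < n i) ∧ ∀ i j, n i / A i = n j / A j :=
  standard_density_eq_population_weighted_density_iff_general M A n hA hpos
end

section
/- Strict increase under inhomogeneous refinement: in the setting where each subarea i of a subdivision (with positive area A_i and nonnegative population n_i, total population n > 0) is partitioned into pieces with positive areas summing to A_i and nonnegative populations summing to n_i, the population-weighted density of the refined subdivision strictly exceeds that of the original subdivision unless, within each original subarea, all the pieces have the same density (i.e. for each i, the ratio n_{i,j} / A_{i,j} is independent of j). -/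
lemma aux_id (K : ℕ) (hK : 0 < K) (a m : Fin K → ℝ) (ha : ∀ j, 0 < a j) :
    ∑ j, (m j)^2 / a j - (∑ j, m j)^2 / (∑ j, a j)
      = ∑ j, a j * (m j / a j - (∑ j, m j)/(∑ j, a j))^2 := by
  have hA : 0 < ∑ j, a j := Finset.sum_pos (fun j _ => ha j) ⟨⟨0, hK⟩, Finset.mem_univ _⟩
  set S := ∑ j, m j with hS
  set T := ∑ j, a j with hT
  have h1 : ∀ j, a j * (m j / a j - S/T)^2
      = (m j)^2/a j - (2*(S/T))*m j + (S/T)^2 * a j := by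
    intro j
    have := (ha j).ne'
    field_simp
    ring
  rw [Finset.sum_congr rfl (fun j _ => h1 j)]
  rw [Finset.sum_add_distrib, Finset.sum_sub_distrib, ← Finset.mul_sum, ← Finset.mul_sum]
  rw [← hS, ← hT]
  field_simp
  ring

lemma aux_le (K : ℕ) (a m : Fin K → ℝ) (ha : ∀ j, 0 < a j) :
    (∑ j, m j)^2 / (∑ j, a j) ≤ ∑ j, (m j)^2 / a j := by
  rcases Nat.eq_zero_or_pos K with h | h
  · subst h; simp
  · have := aux_id K h a m ha
    nlinarith [Finset.sum_nonneg (fun j (_ : j ∈ Finset.univ) =>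
      mul_nonneg (ha j).le (sq_nonneg (m j / a j - (∑ j, m j)/(∑ j, a j))))]

lemma aux_lt (K : ℕ) (a m : Fin K → ℝ) (ha : ∀ j, 0 < a j)
    (hne : ∃ j j', m j / a j ≠ m j' / a j') :
    (∑ j, m j)^2 / (∑ j, a j) < ∑ j, (m j)^2 / a j := by
  obtain ⟨j0, j1, hj⟩ := hne
  have hK : 0 < K := j0.pos
  have hid := aux_id K hK a m ha
  set D := (∑ j, m j)/(∑ j, a j) with hD
  have hx : m j0 / a j0 ≠ D ∨ m j1 / a j1 ≠ D := by
    by_contra h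
    push_neg at h
    exact hj (h.1.trans h.2.symm)
  obtain ⟨j, hjD⟩ : ∃ j, m j / a j ≠ D := by
    rcases hx with h | h
    · exact ⟨j0, h⟩
    · exact ⟨j1, h⟩
  have hpos : 0 < ∑ j, a j * (m j / a j - D)^2 := by
    apply Finset.sum_pos' (fun j _ => mul_nonneg (ha j).le (sq_nonneg _))
    exact ⟨j, Finset.mem_univ _, mul_pos (ha j) (by have h0 := sub_ne_zero.mpr hjD; positivity)⟩
  linarith

/-- the population-weighted density of a refined subdivision
strictly exceeds that of the original subdivision unless, within each
original subarea, all pieces have the same density. -/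
theorem population_weighted_density_lt_of_refine_inhomogeneous
    (M : ℕ) (K : Fin M → ℕ)
    (A n : Fin M → ℝ)
    (a m : (i : Fin M) → Fin (K i) → ℝ)
    (hA : ∀ i, 0 < A i) (hn : ∀ i, 0 ≤ n i)
    (ha : ∀ i j, 0 < a i j) (hm : ∀ i j, 0 ≤ m i j)
    (hsumA : ∀ i, ∑ j, a i j = A i) (hsumn : ∀ i, ∑ j, m i j = n i)
    (hpos : 0 < ∑ i, n i)
    (hinhom : ¬ ∀ i, ∀ j j', m i j / a i j = m i j' / a i j') :
    (1 / ∑ i, n i) * ∑ i, (n i) ^ 2 / A i <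
      (1 / ∑ i, n i) * ∑ i, ∑ j, (m i j) ^ 2 / a i j := by
  push_neg at hinhom
  obtain ⟨i0, j0, j1, hne⟩ := hinhom
  have key : ∑ i, (n i) ^ 2 / A i < ∑ i, ∑ j, (m i j) ^ 2 / a i j := by
    apply Finset.sum_lt_sum
    · intro i _
      rw [← hsumA i, ← hsumn i]
      exact aux_le (K i) (a i) (m i) (ha i)
    · refine ⟨i0, Finset.mem_univ _, ?_⟩
      rw [← hsumA i0, ← hsumn i0]
      exact aux_lt (K i0) (a i0) (m i0) (ha i0) ⟨j0, j1, hne⟩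
  exact mul_lt_mul_of_pos_left key (by positivity)
end
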